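/- arXiv:1005.5525 — 6 statements merged into one kernel-verified Lean document; each statement's English description precedes it below -/
import Mathlib

section
/- Let m ≥ 3 and let a₁, a₂, …, a_m be positive integers with a₁ = min_{1 ≤ i ≤ m} a_i. Consider elimination procedures on the list (a₁, a₂, …, a_m, a₁): while the list has more than 3 elements, remove some element other than the first or the last, paying 2·x·y·z where y is the removed element and x, z are its current left and right neighbours in the list; when exactly three elements (a₁, b, a₁) remain, pay 2·a₁·b and stop. Let t_general be the total payment of an arbitrary elimination procedure and let t_seq = 2·( a₁·a_m + Σ_{i=2}^{m−1} a₁·a_i·a_{i+1} ) be the total payment of the sequential procedure which always removes the second element of the current list. Then t_general ≥ t_seq / 2. -/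
/-- `ElimCost l c` holds iff there is an elimination procedure on the list `l`
with total payment `c`: while the list has more than 3 elements, some element
`y` other than the first or the last one is removed, paying `2*x*y*z` where
`x` and `z` are its current left and right neighbours; when exactly three
elements `(x, b, z)` remain, `2*x*b` is paid and the procedure stops. -/
inductive ElimCost : List ℕ → ℕ → Prop
  | base (x b z : ℕ) : ElimCost [x, b, z] (2 * x * b)
  | step (p q : List ℕ) (x y z c : ℕ) :
      ElimCost (p ++ x :: z :: q) c →
      ElimCost (p ++ x :: y :: z :: q) (2 * x * y * z + c)

/-- Potential function: for a list `[x₀, x₁, …, x_k]`, sums `μ * xᵢ * xᵢ₊₁`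
over adjacent pairs, except that the final pair gets full weight `x_{k-1} * x_k`. -/
def Cpot (μ : ℕ) : List ℕ → ℕ
  | [y, z] => y * z
  | y :: z :: w :: t => μ * (y * z) + Cpot μ (z :: w :: t)
  | _ => 0

lemma Cpot_cons (μ w a : ℕ) (l : List ℕ) (hl : l ≠ []) :
    Cpot μ (w :: a :: l) = μ * (w * a) + Cpot μ (a :: l) := by
  cases l with
  | nil => contradiction
  | cons b t => rfl

lemma lemA (μ x y z : ℕ) (hμ : 1 ≤ μ) (hx : μ ≤ x) (hy : μ ≤ y) (hz : μ ≤ z) :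
    ∀ (r q : List ℕ),
      Cpot μ (r ++ x :: y :: z :: q) ≤ 2*x*y*z + Cpot μ (r ++ x :: z :: q) := by
  intro r
  induction r with
  | nil =>
    intro q
    cases q with
    | nil =>
      simp only [List.nil_append]
      rw [Cpot_cons μ x y _ (by simp)]
      show μ * (x * y) + y * z ≤ 2*x*y*z + x * z
      have h1 : μ * (x * y) ≤ z * (x * y) := Nat.mul_le_mul_right _ hz
      have h2 : 1 * (y * z) ≤ x * (y * z) := Nat.mul_le_mul_right _ (le_trans hμ hx)
      have h3 : μ * (x * y) + y * z ≤ 2*x*y*z := by nlinarith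
      exact le_trans h3 (Nat.le_add_right _ _)
    | cons q0 q' =>
      simp only [List.nil_append]
      rw [Cpot_cons μ x y _ (by simp), Cpot_cons μ y z _ (by simp),
        Cpot_cons μ x z _ (by simp)]
      have h1 : μ * (x * y) ≤ z * (x * y) := Nat.mul_le_mul_right _ hz
      have h2 : μ * (y * z) ≤ x * (y * z) := Nat.mul_le_mul_right _ hx
      have h3 : μ * (x * y) + μ * (y * z) ≤ 2 * x * y * z := by nlinarith
      calc μ * (x * y) + (μ * (y * z) + Cpot μ (z :: q0 :: q'))
          = (μ * (x * y) + μ * (y * z)) + Cpot μ (z :: q0 :: q') := by ring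
        _ ≤ 2 * x * y * z + Cpot μ (z :: q0 :: q') := Nat.add_le_add_right h3 _
        _ ≤ 2 * x * y * z + (μ * (x * z) + Cpot μ (z :: q0 :: q')) :=
            Nat.add_le_add_left (Nat.le_add_left _ _) _
  | cons w r' ih =>
    intro q
    cases r' with
    | nil =>
      simp only [List.cons_append, List.nil_append]
      rw [Cpot_cons μ w x _ (by simp), Cpot_cons μ w x _ (by simp)]
      have := ih q
      simp only [List.nil_append] at this
      omega
    | cons w2 r'' =>
      simp only [List.cons_append]
      rw [Cpot_cons μ w w2 _ (by simp), Cpot_cons μ w w2 _ (by simp)]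
      have := ih q
      simp only [List.cons_append] at this
      omega

lemma ElimCost.length {l : List ℕ} {c : ℕ} (h : ElimCost l c) : 3 ≤ l.length := by
  induction h with
  | base x b z => simp
  | step p q x y z c h ih => simp; omega

lemma main_lemma (μ : ℕ) (hμ : 1 ≤ μ) {l : List ℕ} {c : ℕ} (h : ElimCost l c) :
    (∀ v ∈ l, μ ≤ v) → l.getLast? = some μ → Cpot μ l.tail ≤ c := by
  induction h with
  | base x b z =>
    intro hmem hlast
    have hz : z = μ := by simpa using hlast
    have hx : μ ≤ x := hmem x (by simp)
    show b * z ≤ 2 * x * b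
    rw [hz]
    have e : 2 * x * b = b * x + b * x := by ring
    calc b * μ ≤ b * x := Nat.mul_le_mul_left _ hx
      _ ≤ 2 * x * b := by rw [e]; exact Nat.le_add_right _ _
  | step p q x y z c hprev ih =>
    intro hmem hlast
    have hx : μ ≤ x := hmem x (by simp)
    have hy : μ ≤ y := hmem y (by simp)
    have hz : μ ≤ z := hmem z (by simp)
    have hmem' : ∀ v ∈ p ++ x :: z :: q, μ ≤ v := by
      intro v hv
      apply hmem
      simp only [List.mem_append, List.mem_cons] at hv ⊢
      tauto
    have hlast' : (p ++ x :: z :: q).getLast? = some μ := by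
      rw [List.getLast?_append_cons] at hlast ⊢
      cases q with
      | nil => simpa using hlast
      | cons q0 q' =>
        have e1 : (x :: y :: z :: q0 :: q').getLast? = (q0 :: q').getLast? := by
          have := List.getLast?_append_cons [x, y, z] q0 q'
          simpa using this
        have e2 : (x :: z :: q0 :: q').getLast? = (q0 :: q').getLast? := by
          have := List.getLast?_append_cons [x, z] q0 q'
          simpa using this
        rw [e2, ← e1]; exact hlast
    have IH := ih hmem' hlast'
    cases p with
    | nil =>
      simp only [List.nil_append] at *
      cases q with
      | nil =>
        exfalso
        have := hprev.length
        simp at this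
      | cons q0 q' =>
        show Cpot μ (y :: z :: q0 :: q') ≤ 2*x*y*z + c
        rw [Cpot_cons μ y z _ (by simp)]
        have h1 : μ * (y * z) ≤ x * (y * z) := Nat.mul_le_mul_right _ hx
        have h2 : x * (y * z) ≤ 2 * x * y * z := by
          have e : 2 * x * y * z = x * (y * z) + x * (y * z) := by ring
          rw [e]; exact Nat.le_add_right _ _
        calc μ * (y * z) + Cpot μ (z :: q0 :: q') ≤ 2*x*y*z + Cpot μ (z :: q0 :: q') :=
              Nat.add_le_add_right (le_trans h1 h2) _
          _ ≤ 2*x*y*z + c := Nat.add_le_add_left IH _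
    | cons w p' =>
      simp only [List.cons_append, List.tail_cons] at *
      calc Cpot μ (p' ++ x :: y :: z :: q) ≤ 2*x*y*z + Cpot μ (p' ++ x :: z :: q) :=
            lemA μ x y z hμ hx hy hz p' q
        _ ≤ 2*x*y*z + c := Nat.add_le_add_left IH _

lemma Cpot_eval (μ : ℕ) (f : ℕ → ℕ) :
    ∀ n k, Cpot μ ((List.range' k (n+1)).map f ++ [μ]) =
      f (k+n) * μ + ∑ i ∈ Finset.Ico k (k+n), μ * (f i * f (i+1)) := by
  intro n
  induction n with
  | zero => intro k; simp [Cpot]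
  | succ n ih =>
    intro k
    have hr : List.range' k (n+1+1) = k :: List.range' (k+1) (n+1) := List.range'_succ
    rw [hr]
    have hr2 : List.range' (k+1) (n+1) = (k+1) :: List.range' (k+2) n := List.range'_succ
    rw [hr2]
    simp only [List.map_cons, List.cons_append]
    rw [Cpot_cons μ (f k) (f (k+1)) _ (by simp)]
    have := ih (k+1)
    rw [hr2] at this
    simp only [List.map_cons, List.cons_append] at this
    rw [this]
    rw [Finset.sum_eq_sum_Ico_succ_bot (by omega : k < k + (n+1)) (fun i => μ * (f i * f (i+1)))]
    have : k + 1 + n = k + (n + 1) := by omega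
    rw [this]
    ring

/-- Let `m ≥ 3` and let `a 1, …, a m` be positive integers with `a 1` minimal
among them.  Every elimination procedure on the list `(a 1, a 2, …, a m, a 1)`
pays `t_general` at least one half of
`t_seq = 2 * (a 1 * a m + ∑ i in [2, m-1], a 1 * a i * a (i+1))`,
the payment of the sequential procedure which always removes the second
element of the current list. -/
theorem stmt_0 (m : ℕ) (hm : 3 ≤ m) (a : ℕ → ℕ)
    (hpos : ∀ i ∈ Finset.Icc 1 m, 0 < a i)
    (hmin : ∀ i ∈ Finset.Icc 1 m, a 1 ≤ a i)
    (t_general : ℕ)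
    (h : ElimCost ((List.range m).map (fun i => a (i + 1)) ++ [a 1]) t_general) :
    2 * t_general ≥
      2 * (a 1 * a m + ∑ i ∈ Finset.Icc 2 (m - 1), a 1 * a i * a (i + 1)) := by
  obtain ⟨k, rfl⟩ : ∃ k, m = k + 3 := ⟨m - 3, by omega⟩
  set μ := a 1 with hμdef
  set f : ℕ → ℕ := fun i => a (i + 1) with hfdef
  have hμ1 : 1 ≤ μ := hpos 1 (by simp [Finset.mem_Icc])
  have hmem : ∀ v ∈ (List.range (k+3)).map f ++ [μ], μ ≤ v := by
    intro v hv
    simp only [List.mem_append, List.mem_map, List.mem_range, List.mem_singleton] at hv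
    rcases hv with ⟨i, hi, rfl⟩ | rfl
    · exact hmin (i + 1) (by simp [Finset.mem_Icc]; omega)
    · exact le_refl _
  have hlast : ((List.range (k+3)).map f ++ [μ]).getLast? = some μ :=
    List.getLast?_concat
  have key := main_lemma μ hμ1 h hmem hlast
  -- compute the tail of the list
  have hrange : List.range (k+3) = 0 :: List.range' 1 (k+2) := by
    rw [List.range_eq_range']
    exact List.range'_succ
  have htail : ((List.range (k+3)).map f ++ [μ]).tail
      = (List.range' 1 (k+2)).map f ++ [μ] := by
    rw [hrange]
    simp
  rw [htail] at key
  have heval := Cpot_eval μ f (k+1) 1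
  rw [heval] at key
  -- rewrite the sum in the goal
  have hsum : ∑ i ∈ Finset.Icc 2 (k + 3 - 1), a 1 * a i * a (i + 1)
      = ∑ i ∈ Finset.Ico 1 (1 + (k+1)), μ * (f i * f (i+1)) := by
    have h1 : (2:ℕ) + (k+1) = k + 3 - 1 + 1 := by omega
    rw [show Finset.Icc 2 (k+3-1) = Finset.Ico 2 (k+3-1+1) by rw [Finset.Ico_add_one_right_eq_Icc],
      ← h1, Finset.sum_Ico_eq_sum_range, Finset.sum_Ico_eq_sum_range]
    apply Finset.sum_congr (by congr 1; omega)
    intro j hj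
    have e1 : 1 + j + 1 = 2 + j := by omega
    have e2 : 1 + j + 1 + 1 = 2 + j + 1 := by omega
    simp only [hfdef, e1, e2]
    ring
  have hfm : f (1 + (k+1)) = a (k+3) := by
    simp only [hfdef]
    congr 1
    omega
  rw [hfm] at key
  rw [hsum]
  have : a 1 * a (k+3) = a (k+3) * μ := by rw [hμdef]; ring
  rw [this]
  omega
end

section
/- There exists a GTSP instance (a finite vertex set V partitioned into m ≥ 3 nonempty clusters together with a weight function w : V × V → ℝ) and a feasible tour T such that the minimum-weight tour in N_CO(T) ∪ N_ind(T) is a longest (maximum-weight) feasible tour of the instance and is strictly longer than a shortest feasible tour. -/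
/-- The weight of a GTSP tour `T` on `m` positions: the sum of the weights of
its consecutive edges, including the closing edge. -/
def tourWeight {n m : ℕ} [NeZero m] (w : Fin n → Fin n → ℝ) (T : Fin m → Fin n) : ℝ :=
  ∑ i : Fin m, w (T i) (T (i + 1))

/-- A feasible tour visits exactly one vertex of every cluster, where
`c : Fin n → Fin m` assigns to each vertex its cluster. -/
def Feasible {n m : ℕ} (c : Fin n → Fin m) (T : Fin m → Fin n) : Prop :=
  Function.Bijective (c ∘ T)

/-- `T'` visits the clusters in the same cyclic order as `T`. -/
def SameClusterOrder {n m : ℕ} (c : Fin n → Fin m) (T T' : Fin m → Fin n) : Prop :=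
  ∃ r : Fin m, ∀ i : Fin m, c (T' i) = c (T (i + r))

def gtspW : Fin 4 → Fin 4 → ℕ :=
  ![![0,1,1,0],![1,0,1,0],![1,1,0,1],![0,1,0,0]]

def gtspNwt (T : Fin 3 → Fin 4) : ℕ :=
  gtspW (T 0) (T 1) + gtspW (T 1) (T 2) + gtspW (T 2) (T 0)

lemma gtsp_tourWeight_eq (T : Fin 3 → Fin 4) :
    tourWeight (fun x y => (gtspW x y : ℝ)) T = (gtspNwt T : ℕ) := by
  have h0 : (0 : Fin 3) + 1 = 1 := rfl
  have h1 : (1 : Fin 3) + 1 = 2 := rfl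
  have h2 : (2 : Fin 3) + 1 = 0 := rfl
  simp [tourWeight, Fin.sum_univ_three, gtspNwt, h0, h1, h2]

set_option maxHeartbeats 4000000 in
/-- There exists a GTSP instance (vertex set `Fin n` partitioned into
`m = k + 3 ≥ 3` clusters by `c`, with weights `w`) and a feasible tour `T`
such that every minimum-weight tour among `N_CO(T) ∪ N_ind(T)` is a
maximum-weight (longest) feasible tour and is strictly longer than a shortest
feasible tour.  Here `N_CO(T)` consists of the feasible tours with the same
cyclic cluster order as `T`, and `N_ind(T)` of the feasible tours whose vertex
set equals that of `T`. -/
theorem stmt_3 :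
    ∃ (n k : ℕ) (c : Fin n → Fin (k + 3)) (w : Fin n → Fin n → ℝ)
      (T : Fin (k + 3) → Fin n),
      Feasible c T ∧
      ∀ Tmin : Fin (k + 3) → Fin n,
        Feasible c Tmin →
        (SameClusterOrder c T Tmin ∨ Set.range Tmin = Set.range T) →
        (∀ T' : Fin (k + 3) → Fin n, Feasible c T' →
          (SameClusterOrder c T T' ∨ Set.range T' = Set.range T) →
          tourWeight w Tmin ≤ tourWeight w T') →
        (∀ T'' : Fin (k + 3) → Fin n, Feasible c T'' →
            tourWeight w T'' ≤ tourWeight w Tmin) ∧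
        (∃ T'' : Fin (k + 3) → Fin n, Feasible c T'' ∧
            tourWeight w T'' < tourWeight w Tmin) := by
  refine ⟨4, 0, ![0,1,2,0], (fun x y => (gtspW x y : ℝ)), ![0,1,2], ?_, ?_⟩
  · show Function.Bijective _
    decide
  · intro Tmin hfeas hmem _
    have hmem' : (∃ r : Fin 3, ∀ i : Fin 3,
          (![0,1,2,0] : Fin 4 → Fin 3) (Tmin i) = (![0,1,2,0] : Fin 4 → Fin 3) ((![0,1,2] : Fin 3 → Fin 4) (i + r))) ∨
        (∀ x : Fin 4, (∃ i, Tmin i = x) ↔ (∃ i, (![0,1,2] : Fin 3 → Fin 4) i = x)) := by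
      rcases hmem with h | h
      · exact Or.inl h
      · refine Or.inr fun x => ?_
        have := Set.ext_iff.mp h x
        simpa only [Set.mem_range] using this
    have key : ∀ S : Fin 3 → Fin 4, Function.Bijective ((![0,1,2,0] : Fin 4 → Fin 3) ∘ S) →
        ((∃ r : Fin 3, ∀ i : Fin 3,
          (![0,1,2,0] : Fin 4 → Fin 3) (S i) = (![0,1,2,0] : Fin 4 → Fin 3) ((![0,1,2] : Fin 3 → Fin 4) (i + r))) ∨
        (∀ x : Fin 4, (∃ i, S i = x) ↔ (∃ i, (![0,1,2] : Fin 3 → Fin 4) i = x))) → gtspNwt S = 3 := by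
      decide
    have hmin3 : gtspNwt Tmin = 3 := key Tmin hfeas hmem'
    have hle : ∀ T'' : Fin 3 → Fin 4,
        Function.Bijective ((![0,1,2,0] : Fin 4 → Fin 3) ∘ T'') → gtspNwt T'' ≤ 3 := by
      decide
    constructor
    · intro T'' hT''
      rw [gtsp_tourWeight_eq, gtsp_tourWeight_eq, hmin3]
      exact_mod_cast hle T'' hT''
    · refine ⟨![3,2,1], show Function.Bijective _ by decide, ?_⟩
      rw [gtsp_tourWeight_eq, gtsp_tourWeight_eq, hmin3]
      have : gtspNwt ![3,2,1] = 1 := by decide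
      rw [this]
      norm_num
end

section
/- Let 𝒯₁, …, 𝒯_m (m ≥ 3) be nonempty finite clusters of vertices with weight function w, and let (T₁, …, T_m, T₁) with T_i ∈ 𝒯_i be a shortest cycle through all the layers, i.e., it minimizes w(T′₁, …, T′_m, T′₁) over all selections T′_i ∈ 𝒯_i. Then for all indices a, b with 1 ≤ a, a + 2 ≤ b ≤ m: w_min(𝒯_a, 𝒯_{a+1}, …, 𝒯_b) ≥ w(T_a, T_{a+1}, …, T_b) − w_max(T_a, 𝒯_{a+1}) − w_max(𝒯_{b−1}, T_b) + w_min(𝒯_a, 𝒯_{a+1}) + w_min(𝒯_{b−1}, 𝒯_b), where w_max(T_a, 𝒯_{a+1}) = max_{y ∈ 𝒯_{a+1}} w(T_a, y) and w_max(𝒯_{b−1}, T_b) = max_{y ∈ 𝒯_{b−1}} w(y, T_b). -/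
/-- Let `𝒯 1, …, 𝒯 m` (`m ≥ 3`) be nonempty finite clusters of vertices with
weight function `w`, and let `T` (with `T i ∈ 𝒯 i`) be a shortest cycle
through all the layers, i.e., it minimizes
`∑_{i=1}^{m-1} w (T i) (T (i+1)) + w (T m) (T 1)` over all selections.
Then for all `a`, `b` with `1 ≤ a`, `a + 2 ≤ b ≤ m`, the weight of every path
`(T' a, T' (a+1), …, T' b)` with `T' i ∈ 𝒯 i` (hence the minimum
`w_min(𝒯 a, …, 𝒯 b)`) is at least
`w(T a, …, T b) - w_max(T a, 𝒯 (a+1)) - w_max(𝒯 (b-1), T b)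
  + w_min(𝒯 a, 𝒯 (a+1)) + w_min(𝒯 (b-1), 𝒯 b)`. -/
theorem stmt_4 {V : Type*} (m : ℕ) (hm : 3 ≤ m)
    (𝒯 : ℕ → Finset V) (hne : ∀ i, (𝒯 i).Nonempty)
    (w : V → V → ℝ) (T : ℕ → V)
    (hT : ∀ i ∈ Finset.Icc 1 m, T i ∈ 𝒯 i)
    (hopt : ∀ T' : ℕ → V, (∀ i ∈ Finset.Icc 1 m, T' i ∈ 𝒯 i) →
      (∑ i ∈ Finset.Ico 1 m, w (T i) (T (i + 1))) + w (T m) (T 1) ≤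
        (∑ i ∈ Finset.Ico 1 m, w (T' i) (T' (i + 1))) + w (T' m) (T' 1))
    (a b : ℕ) (ha : 1 ≤ a) (hab : a + 2 ≤ b) (hb : b ≤ m)
    (T' : ℕ → V) (hT' : ∀ i ∈ Finset.Icc a b, T' i ∈ 𝒯 i) :
    (∑ i ∈ Finset.Ico a b, w (T' i) (T' (i + 1))) ≥
      (∑ i ∈ Finset.Ico a b, w (T i) (T (i + 1)))
        - (𝒯 (a + 1)).sup' (hne (a + 1)) (fun y => w (T a) y)
        - (𝒯 (b - 1)).sup' (hne (b - 1)) (fun y => w y (T b))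
        + ((𝒯 a) ×ˢ (𝒯 (a + 1))).inf' ((hne a).product (hne (a + 1)))
            (fun q => w q.1 q.2)
        + ((𝒯 (b - 1)) ×ˢ (𝒯 b)).inf' ((hne (b - 1)).product (hne b))
            (fun q => w q.1 q.2) := by
  classical
  set T'' : ℕ → V := fun i => if a + 1 ≤ i ∧ i ≤ b - 1 then T' i else T i with hT''def
  have hvalid : ∀ i ∈ Finset.Icc 1 m, T'' i ∈ 𝒯 i := by
    intro i hi
    simp only [hT''def]
    split_ifs with h
    · exact hT' i (Finset.mem_Icc.mpr ⟨by omega, by omega⟩)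
    · exact hT i hi
  have key := hopt T'' hvalid
  have hTm : T'' m = T m := by simp only [hT''def]; rw [if_neg]; omega
  have hT1 : T'' 1 = T 1 := by simp only [hT''def]; rw [if_neg]; omega
  rw [hTm, hT1] at key
  have hsum : (∑ i ∈ Finset.Ico 1 m, w (T i) (T (i + 1))) ≤
      ∑ i ∈ Finset.Ico 1 m, w (T'' i) (T'' (i + 1)) := by linarith
  have hsplit : ∀ g : ℕ → V, ∑ i ∈ Finset.Ico 1 m, w (g i) (g (i + 1)) =
      (∑ i ∈ Finset.Ico 1 a, w (g i) (g (i + 1))) +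
      (∑ i ∈ Finset.Ico a b, w (g i) (g (i + 1))) +
      (∑ i ∈ Finset.Ico b m, w (g i) (g (i + 1))) := by
    intro g
    rw [← Finset.sum_Ico_consecutive (fun i => w (g i) (g (i + 1))) (show (1:ℕ) ≤ b by omega) hb,
      ← Finset.sum_Ico_consecutive (fun i => w (g i) (g (i + 1))) (show (1:ℕ) ≤ a by omega)
        (show a ≤ b by omega)]
  rw [hsplit T, hsplit T''] at hsum
  have hlo : ∑ i ∈ Finset.Ico 1 a, w (T'' i) (T'' (i + 1)) =
      ∑ i ∈ Finset.Ico 1 a, w (T i) (T (i + 1)) := by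
    refine Finset.sum_congr rfl fun i hi => ?_
    rw [Finset.mem_Ico] at hi
    simp only [hT''def]
    rw [if_neg (by omega), if_neg (by omega)]
  have hhi : ∑ i ∈ Finset.Ico b m, w (T'' i) (T'' (i + 1)) =
      ∑ i ∈ Finset.Ico b m, w (T i) (T (i + 1)) := by
    refine Finset.sum_congr rfl fun i hi => ?_
    rw [Finset.mem_Ico] at hi
    simp only [hT''def]
    rw [if_neg (by omega), if_neg (by omega)]
  rw [hlo, hhi] at hsum
  have hmid : (∑ i ∈ Finset.Ico a b, w (T i) (T (i + 1))) ≤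
      ∑ i ∈ Finset.Ico a b, w (T'' i) (T'' (i + 1)) := by linarith
  have decomp : ∀ g : ℕ → V, ∑ i ∈ Finset.Ico a b, w (g i) (g (i + 1)) =
      w (g a) (g (a + 1)) + (∑ i ∈ Finset.Ico (a + 1) (b - 1), w (g i) (g (i + 1))) +
        w (g (b - 1)) (g b) := by
    intro g
    rw [← Finset.sum_Ico_consecutive (fun i => w (g i) (g (i + 1))) (show a ≤ a + 1 by omega)
        (show a + 1 ≤ b by omega), Finset.sum_Ico_succ_top (show a ≤ a by omega)]
    have hb1 : Finset.Ico (a + 1) b = Finset.Ico (a + 1) ((b - 1) + 1) := by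
      congr 1; omega
    rw [hb1, Finset.sum_Ico_succ_top (by omega)]
    have : b - 1 + 1 = b := by omega
    rw [this, Finset.Ico_self, Finset.sum_empty]
    ring
  have hmideq : (∑ i ∈ Finset.Ico (a + 1) (b - 1), w (T'' i) (T'' (i + 1))) =
      ∑ i ∈ Finset.Ico (a + 1) (b - 1), w (T' i) (T' (i + 1)) := by
    refine Finset.sum_congr rfl fun i hi => ?_
    rw [Finset.mem_Ico] at hi
    simp only [hT''def]
    rw [if_pos (by omega), if_pos (by omega)]
  have e1 : T'' a = T a := by simp only [hT''def]; rw [if_neg (by omega)]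
  have e2 : T'' (a + 1) = T' (a + 1) := by simp only [hT''def]; rw [if_pos (by omega)]
  have e3 : T'' (b - 1) = T' (b - 1) := by simp only [hT''def]; rw [if_pos (by omega)]
  have e4 : T'' b = T b := by simp only [hT''def]; rw [if_neg (by omega)]
  rw [decomp T'', hmideq, e1, e2, e3, e4] at hmid
  rw [decomp T']
  -- membership facts
  have mTa1 : T' (a + 1) ∈ 𝒯 (a + 1) := hT' _ (Finset.mem_Icc.mpr ⟨by omega, by omega⟩)
  have mTb1 : T' (b - 1) ∈ 𝒯 (b - 1) := hT' _ (Finset.mem_Icc.mpr ⟨by omega, by omega⟩)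
  have mTa : T' a ∈ 𝒯 a := hT' _ (Finset.mem_Icc.mpr ⟨le_refl a, by omega⟩)
  have mTb : T' b ∈ 𝒯 b := hT' _ (Finset.mem_Icc.mpr ⟨by omega, le_refl b⟩)
  have s1 : w (T a) (T' (a + 1)) ≤ (𝒯 (a + 1)).sup' (hne (a + 1)) (fun y => w (T a) y) :=
    Finset.le_sup' _ mTa1
  have s2 : w (T' (b - 1)) (T b) ≤ (𝒯 (b - 1)).sup' (hne (b - 1)) (fun y => w y (T b)) :=
    Finset.le_sup' (fun y => w y (T b)) mTb1
  have i1 : ((𝒯 a) ×ˢ (𝒯 (a + 1))).inf' ((hne a).product (hne (a + 1))) (fun q => w q.1 q.2) ≤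
      w (T' a) (T' (a + 1)) :=
    Finset.inf'_le _ (Finset.mem_product.mpr (⟨mTa, mTa1⟩ : T' a ∈ 𝒯 a ∧ T' (a+1) ∈ 𝒯 (a+1)) : (T' a, T' (a+1)) ∈ _)
  have i2 : ((𝒯 (b - 1)) ×ˢ (𝒯 b)).inf' ((hne (b - 1)).product (hne b)) (fun q => w q.1 q.2) ≤
      w (T' (b - 1)) (T' b) :=
    Finset.inf'_le _ (Finset.mem_product.mpr (⟨mTb1, mTb⟩ : T' (b-1) ∈ 𝒯 (b-1) ∧ T' b ∈ 𝒯 b) : (T' (b-1), T' b) ∈ _)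
  linarith
end

section
/- Let T = (T₁, T₂, …, T_m) be a tour on m ≥ 4 positions and let x, y be positions with 2 ≤ x < y ≤ m − 1. Then the tour obtained from T by swapping the vertices at positions x and y (leaving all other positions unchanged) equals Turn(Turn(T, x−1, y), x, y−1); i.e., a Swap move is the composition of two 2-opt moves. -/
/-- `Turn T x y` is the tour obtained from `T` by reversing the fragment
`T (x+1), T (x+2), …, T y`. -/
def Turn {V : Type*} (T : ℕ → V) (x y : ℕ) : ℕ → V :=
  fun i => if x + 1 ≤ i ∧ i ≤ y then T (x + y + 1 - i) else T i

/-- `swapPos T x y` exchanges the vertices at positions `x` and `y` of the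
tour `T`, leaving all other positions unchanged. -/
def swapPos {V : Type*} (T : ℕ → V) (x y : ℕ) : ℕ → V :=
  fun i => if i = x then T y else if i = y then T x else T i

/-- Let `T` be a tour on `m ≥ 4` positions and `x`, `y` positions with
`2 ≤ x < y ≤ m - 1`.  Then the Swap move exchanging the vertices at positions
`x` and `y` equals the composition of two 2-opt moves:
`swapPos T x y = Turn (Turn T (x-1) y) x (y-1)`. -/
theorem stmt_11 {V : Type*} (m : ℕ) (hm : 4 ≤ m) (T : ℕ → V) (x y : ℕ)
    (hx : 2 ≤ x) (hxy : x < y) (hy : y ≤ m - 1) :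
    swapPos T x y = Turn (Turn T (x - 1) y) x (y - 1) := by
  funext i
  simp only [swapPos, Turn]
  split_ifs with h1 h2 h3 h4 h5 h6 h7 h8 h9 <;>
    first
    | (congr 1; omega)
    | omega
    | rfl
end

section
/- Let T be a feasible GTSP tour on m clusters and let k be an integer with 1 ≤ k ≤ m/2. For each i ∈ {1, …, m}, let Φᵢᵏ(T) be the set of feasible tours that agree with T at every position outside the cyclic window {i+1, i+2, …, i+k} and that, within the window, visit the same k clusters as T (in an arbitrary order, with arbitrary vertex selection within those clusters); let Aᵢᵏ(T) = { T′ ∈ Φᵢᵏ(T) : T′_{i+1} ≠ T_{i+1} }. Then for all i ≠ j in {1, …, m}: Aᵢᵏ(T) ∩ Aⱼᵏ(T) = ∅. -/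
open Fin.NatCast in
/-- `Phi c k T i` is the set of feasible tours that agree with `T` at every
position outside the cyclic window `{i+1, …, i+k}` and that, within the
window, visit the same `k` clusters as `T` (in an arbitrary order, with
arbitrary vertex selection within those clusters). -/
def Phi {n m : ℕ} [NeZero m] (c : Fin n → Fin m) (k : ℕ) (T : Fin m → Fin n)
    (i : Fin m) : Set (Fin m → Fin n) :=
  { T' | Feasible c T' ∧
      (∀ p : Fin m, (∀ j ∈ Finset.Icc 1 k, p ≠ i + (j : Fin m)) → T' p = T p) ∧
      (Finset.Icc 1 k).image (fun j : ℕ => c (T' (i + (j : Fin m)))) =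
        (Finset.Icc 1 k).image (fun j : ℕ => c (T (i + (j : Fin m)))) }

/-- `A c k T i = {T' ∈ Phi c k T i : T' (i+1) ≠ T (i+1)}`. -/
def A {n m : ℕ} [NeZero m] (c : Fin n → Fin m) (k : ℕ) (T : Fin m → Fin n)
    (i : Fin m) : Set (Fin m → Fin n) :=
  { T' ∈ Phi c k T i | T' (i + 1) ≠ T (i + 1) }

open Fin.NatCast in
/-- Let `T` be a feasible GTSP tour on `m` clusters and `1 ≤ k ≤ m / 2`.
Then the sets `A c k T i` are pairwise disjoint. -/
theorem stmt_12 {n m : ℕ} [NeZero m] (k : ℕ) (hk : 1 ≤ k) (hkm : 2 * k ≤ m)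
    (c : Fin n → Fin m) (T : Fin m → Fin n) (hT : Feasible c T)
    (i j : Fin m) (hij : i ≠ j) :
    A c k T i ∩ A c k T j = ∅ := by
  ext T'
  simp only [Set.mem_inter_iff, Set.mem_empty_iff_false, iff_false, not_and]
  rintro ⟨⟨_, hagree_i, _⟩, hne_i⟩ ⟨⟨_, hagree_j, _⟩, hne_j⟩
  have h1 : ∃ a ∈ Finset.Icc 1 k, i + 1 = j + (a : Fin m) := by
    by_contra h
    push_neg at h
    exact hne_i (hagree_j (i + 1) h)
  have h2 : ∃ b ∈ Finset.Icc 1 k, j + 1 = i + (b : Fin m) := by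
    by_contra h
    push_neg at h
    exact hne_j (hagree_i (j + 1) h)
  obtain ⟨a, ha, hA⟩ := h1
  obtain ⟨b, hb, hB⟩ := h2
  simp only [Finset.mem_Icc] at ha hb
  have hsum : ((a + b : ℕ) : Fin m) = ((2 : ℕ) : Fin m) := by
    push_cast
    open Fin.CommRing in linear_combination -hA - hB
  have hmod : a + b ≡ 2 [MOD m] := by
    have := congrArg Fin.val hsum
    rw [Fin.val_natCast, Fin.val_natCast] at this
    exact this
  have hdvd : m ∣ a + b - 2 := (Nat.modEq_iff_dvd' (by omega)).mp hmod.symm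
  have hlt : a + b - 2 < m := by omega
  have hab : a = 1 ∧ b = 1 := by
    have := Nat.eq_zero_of_dvd_of_lt hdvd hlt |> fun h => h
    omega
  obtain ⟨rfl, -⟩ := hab
  apply hij
  have : i + 1 = j + 1 := by simpa using hA
  exact add_right_cancel this
end

section
/- Let T be a feasible GTSP tour on m clusters and let k be an integer with 1 ≤ k ≤ m/2. For each i ∈ {1, …, m}, let Φᵢᵏ(T) be the set of feasible tours that agree with T at every position outside the cyclic window {i+1, i+2, …, i+k} and that, within the window, visit the same k clusters as T (in an arbitrary order, with arbitrary vertex selection within those clusters); let Aᵢᵏ(T) = { T′ ∈ Φᵢᵏ(T) : T′_{i+1} ≠ T_{i+1} }. Then {T} ∪ ⋃_{i=1}^{m} Aᵢᵏ(T) = ⋃_{i=1}^{m} Φᵢᵏ(T). -/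
/-- Let `T` be a feasible GTSP tour on `m` clusters and `1 ≤ k ≤ m / 2`.
Then `{T} ∪ ⋃ i, A c k T i = ⋃ i, Phi c k T i` (the latter being the
`k`-Fragment-Optimization neighbourhood of `T`). -/
theorem stmt_13 {n m : ℕ} [NeZero m] (k : ℕ) (hk : 1 ≤ k) (hkm : 2 * k ≤ m)
    (c : Fin n → Fin m) (T : Fin m → Fin n) (hT : Feasible c T) :
    {T} ∪ ⋃ i : Fin m, A c k T i = ⋃ i : Fin m, Phi c k T i := by
  classical
  letI := Fin.instCommRing m
  letI := Fin.NatCast.instNatCast m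
  -- membership in image via the inverse of a bijection
  have hmem : ∀ (g : Fin m → Fin m) (hg : Function.Bijective g)
      (S : Finset (Fin m)) (x : Fin m),
      x ∈ S.image g ↔ (Equiv.ofBijective g hg).symm x ∈ S := by
    intro g hg S x
    constructor
    · rintro hx
      obtain ⟨a, ha, rfl⟩ := Finset.mem_image.mp hx
      have : (Equiv.ofBijective g hg).symm (g a) = a :=
        (Equiv.ofBijective g hg).symm_apply_apply a
      rwa [this]
    · intro h
      refine Finset.mem_image.mpr ⟨(Equiv.ofBijective g hg).symm x, h, ?_⟩
      exact (Equiv.ofBijective g hg).apply_symm_apply x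
  -- images over a set of bijections agreeing off the set are equal
  have imgeq : ∀ (g g' : Fin m → Fin m), Function.Bijective g →
      Function.Bijective g' → ∀ (W : Finset (Fin m)),
      (∀ p ∉ W, g' p = g p) → W.image g' = W.image g := by
    intro g g' hg hg' W h
    have hc : Wᶜ.image g' = Wᶜ.image g :=
      Finset.image_congr (fun p hp => h p (by simpa using hp))
    ext x
    rw [hmem g' hg', hmem g hg]
    have h1 : ((Equiv.ofBijective g' hg').symm x ∈ W) ↔
        ¬ x ∈ Wᶜ.image g' := by
      rw [hmem g' hg']; simp
    have h2 : ((Equiv.ofBijective g hg).symm x ∈ W) ↔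
        ¬ x ∈ Wᶜ.image g := by
      rw [hmem g hg]; simp
    rw [h1, h2, hc]
  -- key: feasibility + agreement off the window implies Phi membership
  have key : ∀ (T' : Fin m → Fin n) (i : Fin m), Feasible c T' →
      (∀ p : Fin m, (∀ j ∈ Finset.Icc 1 k, p ≠ i + (j : Fin m)) → T' p = T p) →
      T' ∈ Phi c k T i := by
    intro T' i h1 h2
    refine ⟨h1, h2, ?_⟩
    have e1 : (Finset.Icc 1 k).image (fun j : ℕ => c (T' (i + (j : Fin m)))) =
        ((Finset.Icc 1 k).image (fun j : ℕ => i + (j : Fin m))).image (c ∘ T') := by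
      rw [Finset.image_image]; rfl
    have e2 : (Finset.Icc 1 k).image (fun j : ℕ => c (T (i + (j : Fin m)))) =
        ((Finset.Icc 1 k).image (fun j : ℕ => i + (j : Fin m))).image (c ∘ T) := by
      rw [Finset.image_image]; rfl
    rw [e1, e2]
    refine imgeq (c ∘ T) (c ∘ T') hT h1 _ ?_
    intro p hp
    have : ∀ j ∈ Finset.Icc 1 k, p ≠ i + (j : Fin m) := by
      intro j hj hpe
      exact hp (Finset.mem_image.mpr ⟨j, hj, hpe.symm⟩)
    exact congrArg c (h2 p this)
  ext T'
  simp only [Set.mem_union, Set.mem_singleton_iff, Set.mem_iUnion]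
  constructor
  · rintro (rfl | ⟨i, hA⟩)
    · exact ⟨0, key T' 0 hT (fun _ _ => rfl)⟩
    · exact ⟨i, hA.1⟩
  · rintro ⟨i, hfeas, hout, _⟩
    by_cases hTT : T' = T
    · exact Or.inl hTT
    · right
      have hdiff : ∃ j ∈ Finset.Icc 1 k,
          T' (i + (j : Fin m)) ≠ T (i + (j : Fin m)) := by
        by_contra h
        push_neg at h
        apply hTT
        funext p
        by_cases hp : ∀ j ∈ Finset.Icc 1 k, p ≠ i + (j : Fin m)
        · exact hout p hp
        · push_neg at hp
          obtain ⟨j, hj, rfl⟩ := hp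
          exact h j hj
      set D := (Finset.Icc 1 k).filter
        (fun j : ℕ => T' (i + (j : Fin m)) ≠ T (i + (j : Fin m))) with hDdef
      have hD : D.Nonempty := by
        obtain ⟨j, hj, hne⟩ := hdiff
        exact ⟨j, Finset.mem_filter.mpr ⟨hj, hne⟩⟩
      set j₀ := D.min' hD with hj₀def
      have hj₀D : j₀ ∈ D := D.min'_mem hD
      have hj₀Icc : j₀ ∈ Finset.Icc 1 k := (Finset.mem_filter.mp hj₀D).1
      have hj₀ne : T' (i + (j₀ : Fin m)) ≠ T (i + (j₀ : Fin m)) :=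
        (Finset.mem_filter.mp hj₀D).2
      have hj₀1 : 1 ≤ j₀ := (Finset.mem_Icc.mp hj₀Icc).1
      have hj₀k : j₀ ≤ k := (Finset.mem_Icc.mp hj₀Icc).2
      set i' : Fin m := i + ((j₀ - 1 : ℕ) : Fin m) with hi'def
      have hcast : ∀ t : ℕ, i' + (t : Fin m) = i + ((j₀ - 1 + t : ℕ) : Fin m) := by
        intro t
        rw [hi'def]
        push_cast
        ring
      have hout' : ∀ p : Fin m,
          (∀ j ∈ Finset.Icc 1 k, p ≠ i' + (j : Fin m)) → T' p = T p := by
        intro p hp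
        by_contra hne
        have hpin : ¬ ∀ j ∈ Finset.Icc 1 k, p ≠ i + (j : Fin m) :=
          fun h => hne (hout p h)
        push_neg at hpin
        obtain ⟨j₁, hj₁, rfl⟩ := hpin
        have hj₁Icc := Finset.mem_Icc.mp hj₁
        have hj₁D : j₁ ∈ D := Finset.mem_filter.mpr ⟨hj₁, hne⟩
        have hle : j₀ ≤ j₁ := D.min'_le j₁ hj₁D
        refine hp (j₁ - j₀ + 1) ?_ ?_
        · exact Finset.mem_Icc.mpr ⟨by omega, by omega⟩
        · rw [hcast]
          congr 2
          omega
      refine ⟨i', key T' i' hfeas hout', ?_⟩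
      have h1 : i' + 1 = i + (j₀ : Fin m) := by
        have : i' + 1 = i' + ((1 : ℕ) : Fin m) := by norm_num
        rw [this, hcast]
        congr 2
        omega
      rw [h1]
      exact hj₀ne
end
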